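/- Let Z ⊆ ℂⁿ be a locally closed set. If there exist z* ∈ Z, r > 0, ε > 0, and a continuous strictly plurisubharmonic function u on B(z*, r) with u(z*) = 0 and u(z) ≤ −ε|z − z*|² for all z ∈ Z ∩ B(z*, r), then Z is not a local maximum set. -/

import Mathlib

open Complex Metric Filter Topology

noncomputable section

/-- ℂⁿ with the Euclidean (Hermitian) norm. -/
abbrev Cn (n : ℕ) := EuclideanSpace ℂ (Fin n)

/-- Matrices of coefficients of a (1,1)-form. -/
abbrev Mat (n : ℕ) := Fin n → Fin n → ℂ

variable {n : ℕ}

/-- standard basis vector -/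
def ee (n : ℕ) (j : Fin n) : Cn n := WithLp.toLp 2 (fun k => if k = j then 1 else 0)

/-- real directional derivative -/
def Dd (f : Cn n → ℝ) (v : Cn n) (x : Cn n) : ℝ := fderiv ℝ f x v

/-- Plurisubharmonic on `U`: upper semicontinuous and satisfying the sub-mean value
inequality on every closed disc of a complex line contained in `U`. -/
def PSHOn (u : Cn n → ℝ) (U : Set (Cn n)) : Prop :=
  UpperSemicontinuousOn u U ∧
  ∀ x ∈ U, ∀ ξ : Cn n, ∀ r : ℝ, 0 < r →
    (∀ t : ℂ, ‖t‖ ≤ r → x + t • ξ ∈ U) →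
    u x ≤ (1 / (2 * Real.pi)) *
      ∫ θ in (0:ℝ)..(2 * Real.pi), u (x + ((r : ℂ) * Complex.exp (θ * Complex.I)) • ξ)

/-- Strictly plurisubharmonic at a point: locally psh minus a positive multiple
of `‖y - x‖²` remains psh. -/
def StrictlyPSHAt (u : Cn n → ℝ) (x : Cn n) : Prop :=
  ∃ c > 0, ∃ r > 0, PSHOn (fun y => u y - c * ‖y - x‖ ^ 2) (ball x r)

/-- entry `∂²u/∂z_j ∂z̄_k` of the complex Hessian of a real function, via real
directional derivatives. -/
def hessEntry (u : Cn n → ℝ) (x : Cn n) (j k : Fin n) : ℂ :=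
  (((Dd (Dd u (ee n k)) (ee n j) x + Dd (Dd u (Complex.I • ee n k)) (Complex.I • ee n j) x : ℝ) : ℂ)
    + Complex.I * ((Dd (Dd u (Complex.I • ee n k)) (ee n j) x
        - Dd (Dd u (ee n k)) (Complex.I • ee n j) x : ℝ) : ℂ)) / 4

/-- the complex Hessian matrix `i∂∂̄u` of a real function -/
def hessMat (u : Cn n → ℝ) (x : Cn n) : Mat n := fun j k => hessEntry u x j k

/-- the Wirtinger derivative `∂u/∂z_j` of a real function -/
def delZ (u : Cn n → ℝ) (x : Cn n) (j : Fin n) : ℂ :=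
  (((Dd u (ee n j) x : ℝ) : ℂ) - Complex.I * ((Dd u (Complex.I • ee n j) x : ℝ) : ℂ)) / 2

/-- the matrix of the form `i∂u ∧ ∂̄u` -/
def gradMat (u : Cn n → ℝ) (x : Cn n) : Mat n := fun j k => delZ u x j * (starRingEnd ℂ) (delZ u x k)

/-- smooth compactly supported (1,1)-test forms, given by their coefficient matrices -/
def IsTestForm (φ : Cn n → Mat n) : Prop := ContDiff ℝ (⊤ : ℕ∞) φ ∧ HasCompactSupport φ

/-- Currents of bidimension (1,1): linear functionals on (1,1)-test forms. -/
structure Current11 (n : ℕ) where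
  toFun : (Cn n → Mat n) → ℂ
  add' : ∀ φ ψ, toFun (φ + ψ) = toFun φ + toFun ψ
  smul' : ∀ (c : ℂ) φ, toFun (c • φ) = c * toFun φ

instance : Zero (Current11 n) := ⟨⟨fun _ => 0, by intros; simp, by intros; simp⟩⟩

instance : Add (Current11 n) :=
  ⟨fun T S => ⟨fun φ => T.toFun φ + S.toFun φ,
    by intro φ ψ; (try dsimp only); rw [T.add', S.add']; ring,
    by intro c φ; (try dsimp only); rw [T.smul', S.smul']; ring⟩⟩

instance : SMul ℝ (Current11 n) :=
  ⟨fun r T => ⟨fun φ => (r : ℂ) * T.toFun φ,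
    by intro φ ψ; (try dsimp only); rw [T.add']; ring,
    by intro c φ; (try dsimp only); rw [T.smul']; ring⟩⟩

/-- multiplication of a current by a continuous function -/
def Current11.fsmul (f : Cn n → ℝ) (T : Current11 n) : Current11 n where
  toFun φ := T.toFun fun x => (f x : ℂ) • φ x
  add' φ ψ := by
    try dsimp only
    rw [show (fun x => (f x : ℂ) • (φ + ψ) x)
        = (fun x => (f x : ℂ) • φ x) + fun x => (f x : ℂ) • ψ x by
      funext x; exact smul_add ((f x : ℂ)) (φ x) (ψ x)]
    exact T.add' _ _
  smul' c φ := by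
    try dsimp only
    rw [show (fun x => (f x : ℂ) • (c • φ) x) = c • fun x => (f x : ℂ) • φ x by
      funext x; exact smul_comm ((f x : ℂ)) c (φ x)]
    exact T.smul' _ _

/-- positive semidefinite coefficient matrix (pointwise positivity of a (1,1)-form) -/
def PSDMat (A : Mat n) : Prop :=
  ∀ ξ : Fin n → ℂ, (∑ j, ∑ k, (starRingEnd ℂ) (ξ j) * A j k * ξ k).im = 0 ∧
    0 ≤ (∑ j, ∑ k, (starRingEnd ℂ) (ξ j) * A j k * ξ k).re

/-- positivity of a (1,1)-current: nonnegative on pointwise positive semidefinite test forms -/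
def Current11.IsPositive (T : Current11 n) : Prop :=
  ∀ φ : Cn n → Mat n, IsTestForm φ → (∀ x, PSDMat (φ x)) →
    (T.toFun φ).im = 0 ∧ 0 ≤ (T.toFun φ).re

/-- `i∂∂̄ T = 0` -/
def Current11.ddbarClosed (T : Current11 n) : Prop :=
  ∀ ψ : Cn n → ℝ, ContDiff ℝ (⊤ : ℕ∞) ψ → HasCompactSupport ψ → T.toFun (hessMat ψ) = 0

/-- support of a current -/
def Current11.supp (T : Current11 n) : Set (Cn n) :=
  {x | ∀ r > 0, ∃ φ : Cn n → Mat n, IsTestForm φ ∧ tsupport φ ⊆ ball x r ∧ T.toFun φ ≠ 0}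

/-- `T ∧ i∂∂̄u = 0`, defined through approximation of `u` by smooth psh functions. -/
def WedgeDDbarVanishes (T : Current11 n) (u : Cn n → ℝ) (U : Set (Cn n)) : Prop :=
  ∀ v : ℕ → Cn n → ℝ, (∀ m, ContDiff ℝ (⊤ : ℕ∞) (v m)) → (∀ m, PSHOn (v m) U) →
    TendstoLocallyUniformlyOn v u atTop U →
    ∀ χ : Cn n → ℝ, ContDiff ℝ (⊤ : ℕ∞) χ → HasCompactSupport χ → tsupport χ ⊆ U →
      Tendsto (fun m => T.toFun fun x => (χ x : ℂ) • hessMat (v m) x) atTop (nhds 0)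

/-- `T ∧ i∂u ∧ ∂̄u = 0`, defined through approximation of `u` by smooth psh functions. -/
def WedgeGradVanishes (T : Current11 n) (u : Cn n → ℝ) (U : Set (Cn n)) : Prop :=
  ∀ v : ℕ → Cn n → ℝ, (∀ m, ContDiff ℝ (⊤ : ℕ∞) (v m)) → (∀ m, PSHOn (v m) U) →
    TendstoLocallyUniformlyOn v u atTop U →
    ∀ χ : Cn n → ℝ, ContDiff ℝ (⊤ : ℕ∞) χ → HasCompactSupport χ → tsupport χ ⊆ U →
      Tendsto (fun m => T.toFun fun x => (χ x : ℂ) • gradMat (v m) x) atTop (nhds 0)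

/-- allowable open sets: relatively compact or cocompact -/
def Allowable (U : Set (Cn n)) : Prop :=
  IsOpen U ∧ (IsCompact (closure U) ∨ IsCompact Uᶜ)

/-- Admissible classes of continuous plurisubharmonic functions, following Slodkowski. -/
structure AdmissibleClass (n : ℕ) where
  F : Set (Cn n) → Set (Cn n → ℝ)
  mem_psh : ∀ U, Allowable U → ∀ φ ∈ F U, ContinuousOn φ U ∧ PSHOn φ U
  A1 : ∀ φ : ℕ → Cn n → ℝ, (∀ m, φ m ∈ F Set.univ) →
    ∃ ε : ℕ → ℝ, (∀ m, 0 < ε m) ∧ ∃ g ∈ F Set.univ,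
      TendstoLocallyUniformly (fun N x => ∑ m ∈ Finset.range N, ε m * φ m x) g atTop
  A2 : ∀ U W, Allowable U → Allowable W → W ⊆ U → ∀ φ ∈ F U, φ ∈ F W
  A3 : ∀ (m : ℕ) (U : Fin m → Set (Cn n)), (∀ i, Allowable (U i)) → (⋃ i, U i) = Set.univ →
    ∀ φ : Cn n → ℝ, (∀ i, φ ∈ F (U i)) → φ ∈ F Set.univ
  A4cone : ∀ U, Allowable U → ∀ φ ∈ F U, ∀ ψ ∈ F U, ∀ a b : ℝ, 0 ≤ a → 0 ≤ b →
    (fun x => a * φ x + b * ψ x) ∈ F U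
  A4bdd : ∀ U, Allowable U → ∀ φ : Cn n → ℝ, ContDiff ℝ (⊤ : ℕ∞) φ → (∃ M, ∀ x, |φ x| ≤ M) →
    PSHOn φ U → φ ∈ F U
  A5 : ∀ U, Allowable U → ∀ (m : ℕ) (φ : Fin m → Cn n → ℝ), (∀ i, φ i ∈ F U) →
    ∀ v : (Fin m → ℝ) → ℝ, ContDiff ℝ (⊤ : ℕ∞) v → ConvexOn ℝ Set.univ v →
    (∀ a b : Fin m → ℝ, (∀ i, a i ≤ b i) → v a ≤ v b) →
    (∃ C, ∀ a, |v a| ≤ C * (1 + ‖a‖)) →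
    (fun x => v fun i => φ i x) ∈ F U
  A6 : ∀ U, Allowable U → ∀ φ ∈ F U, (∀ x ∈ U, StrictlyPSHAt φ x) →
    ∀ ρ : Cn n → ℝ, ContDiff ℝ (⊤ : ℕ∞) ρ → tsupport ρ ⊆ U → IsCompact (tsupport ρ) →
      ∃ t > 0, (fun x => φ x + t * ρ x) ∈ F U
  A7 : ∀ p : Cn n, ∃ Ω ∈ nhds p, ∀ V, Allowable V → V ⊆ Ω → ∀ φ ∈ F V,
    ∃ v : ℕ → Cn n → ℝ, (∀ m, v m ∈ F V ∧ ContDiff ℝ (⊤ : ℕ∞) (v m)) ∧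
      TendstoLocallyUniformlyOn v φ atTop V

/-- the singular locus of an admissible class -/
def AdmissibleClass.singularLocus (𝓕 : AdmissibleClass n) : Set (Cn n) :=
  {x | ¬ ∃ φ ∈ 𝓕.F Set.univ, StrictlyPSHAt φ x}

/-- `𝓕`-currents: nonzero positive `∂∂̄`-closed currents of bidimension (1,1) killing
`i∂∂̄u` for every `u` in the class on an allowable neighbourhood of the support. -/
def IsFCurrent (𝓕 : AdmissibleClass n) (T : Current11 n) : Prop :=
  T ≠ 0 ∧ T.IsPositive ∧ T.ddbarClosed ∧
  ∀ U, Allowable U → T.supp ⊆ U → ∀ u ∈ 𝓕.F U, WedgeDDbarVanishes T u U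

/-- local maximum sets -/
def IsLocalMaxSet (Z : Set (Cn n)) : Prop :=
  ∀ x ∈ Z, ∃ V ∈ nhds x, ∀ K : Set (Cn n), IsCompact K → K ⊆ V →
    ∀ (W : Set (Cn n)) (ψ : Cn n → ℝ), IsOpen W → K ⊆ W → PSHOn ψ W →
      sSup (ψ '' (Z ∩ K)) = sSup (ψ '' (Z ∩ frontier K))


lemma pshOn_mono' {n : ℕ} {φ : Cn n → ℝ} {U V : Set (Cn n)} (h : PSHOn φ U) (hVU : V ⊆ U) :
    PSHOn φ V :=
  ⟨h.1.mono hVU, fun x hx ξ r hr hdisc =>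
    h.2 x (hVU hx) ξ r hr fun t ht => hVU (hdisc t ht)⟩

lemma pshOn_add_one' {n : ℕ} {φ : Cn n → ℝ} {U : Set (Cn n)}
    (hpsh : PSHOn φ U) (hcont : ContinuousOn φ U) :
    PSHOn (fun w => φ w + 1) U := by
  constructor
  · exact (hcont.add continuousOn_const).upperSemicontinuousOn
  · intro x hx ξ r hr hdisc
    have hmain := hpsh.2 x hx ξ r hr hdisc
    have hcont' : Continuous fun θ : ℝ =>
        φ (x + ((r : ℂ) * Complex.exp (θ * Complex.I)) • ξ) := by
      apply hcont.comp_continuous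
      · fun_prop
      · intro θ
        apply hdisc
        rw [norm_mul, Complex.norm_exp_ofReal_mul_I, mul_one, Complex.norm_real,
          Real.norm_eq_abs, abs_of_pos hr]
    have hint : IntervalIntegrable
        (fun θ : ℝ => φ (x + ((r : ℂ) * Complex.exp (θ * Complex.I)) • ξ))
        MeasureTheory.volume 0 (2 * Real.pi) := hcont'.intervalIntegrable _ _
    simp only
    rw [intervalIntegral.integral_add hint intervalIntegrable_const,
      intervalIntegral.integral_const, sub_zero, smul_eq_mul, mul_one]
    have hπ : (0:ℝ) < 2 * Real.pi := Real.two_pi_pos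
    set I := ∫ θ in (0:ℝ)..(2 * Real.pi),
      φ (x + ((r : ℂ) * Complex.exp (θ * Complex.I)) • ξ)
    have : (1 / (2 * Real.pi)) * (I + 2 * Real.pi)
        = (1 / (2 * Real.pi)) * I + 1 := by field_simp
    rw [this]
    linarith

/-- Easy implication of Proposition 3.3: a strictly psh function with a quadratic peak
on `Z` prevents `Z` from being a local maximum set. -/
theorem stmt5 {n : ℕ} (Z : Set (Cn n)) (hZ : IsLocallyClosed Z)
    (z : Cn n) (hzZ : z ∈ Z) (r ε : ℝ) (hr : 0 < r) (hε : 0 < ε)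
    (u : Cn n → ℝ) (hu : ContinuousOn u (ball z r))
    (hsp : ∀ y ∈ ball z r, StrictlyPSHAt u y)
    (hz0 : u z = 0) (hub : ∀ w ∈ Z ∩ ball z r, u w ≤ -ε * ‖w - z‖ ^ 2) :
    ¬ IsLocalMaxSet Z := by
  intro hlms
  obtain ⟨c, hc, r₁, hr₁, hφpsh⟩ := hsp z (mem_ball_self hr)
  obtain ⟨V, hV, hmax⟩ := hlms z hzZ
  obtain ⟨δ, hδ, hδV⟩ := Metric.mem_nhds_iff.1 hV
  set r₂ : ℝ := min r r₁ with hr₂def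
  have hr₂ : 0 < r₂ := lt_min hr hr₁
  set ρ : ℝ := min δ r₂ / 2 with hρdef
  have hρ : 0 < ρ := by positivity
  have hρδ : ρ < δ := by
    have := min_le_left δ r₂; simp only [hρdef]; linarith [lt_min hδ hr₂]
  have hρr₂ : ρ < r₂ := by
    have := min_le_right δ r₂; simp only [hρdef]; linarith [lt_min hδ hr₂]
  have hρr : ρ < r := lt_of_lt_of_le hρr₂ (min_le_left r r₁)
  set ψ : Cn n → ℝ := fun w => (u w - c * ‖w - z‖ ^ 2) + 1 with hψdef
  set K : Set (Cn n) := closedBall z ρ with hKdef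
  have hKV : K ⊆ V := fun w hw => hδV (lt_of_le_of_lt (mem_closedBall.1 hw) hρδ)
  have hKW : K ⊆ ball z r₂ := fun w hw => lt_of_le_of_lt (mem_closedBall.1 hw) hρr₂
  have hWr : ball z r₂ ⊆ ball z r := ball_subset_ball (min_le_left r r₁)
  have hψpsh : PSHOn ψ (ball z r₂) := by
    apply pshOn_add_one'
    · exact pshOn_mono' hφpsh (ball_subset_ball (min_le_right r r₁))
    · apply ContinuousOn.sub (hu.mono hWr)
      exact (continuousOn_const.mul (((continuous_id.sub continuous_const).norm.pow 2).continuousOn))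
  have heq := hmax K (isCompact_closedBall z ρ) hKV (ball z r₂) ψ isOpen_ball hKW hψpsh
  -- ψ z = 1
  have hψz : ψ z = 1 := by simp [hψdef, hz0]
  -- ψ ≤ 1 on Z ∩ ball z r
  have hψle : ∀ w ∈ Z, w ∈ ball z r → ψ w ≤ 1 := by
    intro w hwZ hwb
    have h1 := hub w ⟨hwZ, hwb⟩
    have h2 : 0 ≤ c * ‖w - z‖ ^ 2 := by positivity
    have h3 : 0 ≤ ε * ‖w - z‖ ^ 2 := by positivity
    simp only [hψdef]
    nlinarith
  -- LHS = 1
  have hzK : z ∈ Z ∩ K := ⟨hzZ, mem_closedBall_self hρ.le⟩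
  have hlhs : sSup (ψ '' (Z ∩ K)) = 1 := by
    apply le_antisymm
    · apply csSup_le (Set.Nonempty.image ψ ⟨z, hzK⟩)
      rintro y ⟨w, ⟨hwZ, hwK⟩, rfl⟩
      exact hψle w hwZ (hWr (hKW hwK))
    · have h1 : (1:ℝ) ∈ ψ '' (Z ∩ K) := ⟨z, hzK, hψz⟩
      apply le_csSup _ h1
      exact ⟨1, by rintro y ⟨w, ⟨hwZ, hwK⟩, rfl⟩; exact hψle w hwZ (hWr (hKW hwK))⟩
  have hfr : frontier K = sphere z ρ := frontier_closedBall z hρ.ne'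
  rw [hlhs, hfr] at heq
  rcases Set.eq_empty_or_nonempty (Z ∩ sphere z ρ) with hne | hne
  · rw [hne, Set.image_empty, Real.sSup_empty] at heq
    norm_num at heq
  · have hbound : ∀ y ∈ ψ '' (Z ∩ sphere z ρ), y ≤ 1 - ε * ρ ^ 2 := by
      rintro y ⟨w, ⟨hwZ, hws⟩, rfl⟩
      have hnorm : ‖w - z‖ = ρ := by
        rw [← dist_eq_norm]; exact mem_sphere.1 hws
      have hwb : w ∈ ball z r := by
        rw [mem_ball, dist_eq_norm, hnorm]; exact hρr
      have h1 := hub w ⟨hwZ, hwb⟩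
      rw [hnorm] at h1
      have h2 : 0 ≤ c * ρ ^ 2 := by positivity
      simp only [hψdef, hnorm]
      nlinarith
    have : sSup (ψ '' (Z ∩ sphere z ρ)) ≤ 1 - ε * ρ ^ 2 :=
      csSup_le (hne.image ψ) hbound
    rw [← heq] at this
    nlinarith [mul_pos hε (pow_pos hρ 2)]

end
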